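/- arXiv:2409.12310 — 2 statements merged into one kernel-verified Lean document; each statement's English description precedes it below -/
import Mathlib

section
/- Let I_xr, I_xs, I_yr, I_ys, I_zr, I_zs, C_d, R, d be real constants with I_xr + I_xs ≠ 0, I_yr + I_ys ≠ 0, I_zr ≠ 0 and I_zs ≠ 0. Let h_x, h_y, h_z, Ω_x, Ω_y, Ω_z, β̇ : ℝ → ℝ with h_z, Ω_z, β̇ differentiable, and suppose for all t: (i) h_x = (I_xr + I_xs) Ω_x, (ii) h_y = (I_yr + I_ys) Ω_y, (iii) h_z = (I_zr + I_zs) Ω_z + I_zs β̇, (iv) h_z' = Ω_y h_x − Ω_x h_y, and (v) Ω_z' = C_d (R − d)² β̇ / I_zr (the friction law). Then for all t, β̈(t) = − β̇(t) C_d (R − d)² (I_zs + I_zr)/(I_zs I_zr) + h_x(t) h_y(t)/((I_yr + I_ys) I_zs) − h_x(t) h_y(t)/((I_xr + I_xs) I_zs), where β̈ denotes the derivative of β̇. -/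
/-!
Differentiating `h_z = (I_zr + I_zs) Ω_z + I_zs β̇` gives `h_z' = (I_zr + I_zs) Ω_z' + I_zs β̈`.
The left side is `Ω_y h_x − Ω_x h_y = h_x h_y (1/I_y − 1/I_x)` once `Ω_x, Ω_y` are eliminated
through the diagonal inertia, and `Ω_z'` is given by the friction law; solve for `β̈`.
-/

lemma deriv_eq_const_mul_add_const_mul {f g k : ℝ → ℝ} {a b t : ℝ}
    (hf : ∀ s, f s = a * g s + b * k s) (hg : DifferentiableAt ℝ g t)
    (hk : DifferentiableAt ℝ k t) :
    deriv f t = a * deriv g t + b * deriv k t := by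
  rw [show f = fun s => a * g s + b * k s from funext hf]
  exact ((hg.hasDerivAt.const_mul a).add (hk.hasDerivAt.const_mul b)).deriv

lemma cross_z_eq_of_diagonal_inertia {Ix Iy Ωx Ωy hx hy : ℝ} (hIx : Ix ≠ 0) (hIy : Iy ≠ 0)
    (hhx : hx = Ix * Ωx) (hhy : hy = Iy * Ωy) :
    Ωy * hx - Ωx * hy = hx * hy / Iy - hx * hy / Ix := by
  subst hhx hhy
  field_simp

theorem betaddot_equation_general
    (Ixr Ixs Iyr Iys Izr Izs Cd R d : ℝ)
    (hx0 : Ixr + Ixs ≠ 0) (hy0 : Iyr + Iys ≠ 0) (hzs : Izs ≠ 0)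
    (hX hY hZ ΩX ΩY ΩZ βdot : ℝ → ℝ)
    (hΩz : Differentiable ℝ ΩZ)
    (hβ : Differentiable ℝ βdot)
    (h1 : ∀ t : ℝ, hX t = (Ixr + Ixs) * ΩX t)
    (h2 : ∀ t : ℝ, hY t = (Iyr + Iys) * ΩY t)
    (h3 : ∀ t : ℝ, hZ t = (Izr + Izs) * ΩZ t + Izs * βdot t)
    (h4 : ∀ t : ℝ, deriv hZ t = ΩY t * hX t - ΩX t * hY t)
    (h5 : ∀ t : ℝ, deriv ΩZ t = Cd * (R - d) ^ 2 * βdot t / Izr) :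
    ∀ t : ℝ, deriv βdot t
      = -βdot t * Cd * (R - d) ^ 2 * (Izs + Izr) / (Izs * Izr)
        + hX t * hY t / ((Iyr + Iys) * Izs)
        - hX t * hY t / ((Ixr + Ixs) * Izs) := by
  intro t
  have hZ_deriv : (Izr + Izs) * (Cd * (R - d) ^ 2 * βdot t / Izr) + Izs * deriv βdot t
      = hX t * hY t / (Iyr + Iys) - hX t * hY t / (Ixr + Ixs) := by
    rw [← h5, ← deriv_eq_const_mul_add_const_mul h3 (hΩz t) (hβ t), h4,
      cross_z_eq_of_diagonal_inertia hx0 hy0 (h1 t) (h2 t)]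
  calc deriv βdot t = Izs * deriv βdot t / Izs := (mul_div_cancel_left₀ _ hzs).symm
    _ = (hX t * hY t / (Iyr + Iys) - hX t * hY t / (Ixr + Ixs)
          - (Izr + Izs) * (Cd * (R - d) ^ 2 * βdot t / Izr)) / Izs := by
        rw [← hZ_deriv, add_sub_cancel_left]
    _ = _ := by simp only [← div_div]; ring

/-- **The ODE for `β̇` in the point-mass slug model.**
From the component relations between angular momentum and angular velocities,
the `z`-component of the angular momentum equation, and the friction law
`Ω_z' = C_d (R − d)² β̇ / I_zr`, one derives
`β̈ = −β̇ C_d (R − d)² (I_zs + I_zr)/(I_zs I_zr)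
  + h_x h_y/((I_yr + I_ys) I_zs) − h_x h_y/((I_xr + I_xs) I_zs)`. -/
theorem betaddot_equation
    (Ixr Ixs Iyr Iys Izr Izs Cd R d : ℝ)
    (hx0 : Ixr + Ixs ≠ 0) (hy0 : Iyr + Iys ≠ 0) (hzr : Izr ≠ 0) (hzs : Izs ≠ 0)
    (hX hY hZ ΩX ΩY ΩZ βdot : ℝ → ℝ)
    (hhz : Differentiable ℝ hZ) (hΩz : Differentiable ℝ ΩZ)
    (hβ : Differentiable ℝ βdot)
    (h1 : ∀ t : ℝ, hX t = (Ixr + Ixs) * ΩX t)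
    (h2 : ∀ t : ℝ, hY t = (Iyr + Iys) * ΩY t)
    (h3 : ∀ t : ℝ, hZ t = (Izr + Izs) * ΩZ t + Izs * βdot t)
    (h4 : ∀ t : ℝ, deriv hZ t = ΩY t * hX t - ΩX t * hY t)
    (h5 : ∀ t : ℝ, deriv ΩZ t = Cd * (R - d) ^ 2 * βdot t / Izr) :
    ∀ t : ℝ, deriv βdot t
      = -βdot t * Cd * (R - d) ^ 2 * (Izs + Izr) / (Izs * Izr)
        + hX t * hY t / ((Iyr + Iys) * Izs)
        - hX t * hY t / ((Ixr + Ixs) * Izs) :=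
  betaddot_equation_general Ixr Ixs Iyr Iys Izr Izs Cd R d hx0 hy0 hzs hX hY hZ ΩX ΩY ΩZ βdot hΩz hβ
    h1 h2 h3 h4 h5
end

section
/- Let a, b, c > 0 be pairwise distinct reals, let K > 0, and consider the autonomous system on ℝ³ × ℝ with state (h, β̇) = ((h_x, h_y, h_z), β̇) given by h' = h × [ M⁻¹ ( h + β̇ p e₃ ) ] and β̇' = − K β̇ + h_x h_y / (b q) − h_x h_y / (a q), where M = diag(a, b, c), p ∈ ℝ, q > 0, e₃ = (0,0,1) and × denotes the cross product in ℝ³. Then (h, β̇) is an equilibrium point of this system (i.e., both right-hand sides vanish) if and only if β̇ = 0 and at most one of the components h_x, h_y, h_z is nonzero. In particular, on each angular momentum sphere h_x² + h_y² + h_z² = r² with r > 0, the equilibria are exactly the six points (±r, 0, 0, 0), (0, ±r, 0, 0) and (0, 0, ±r, 0). -/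
open Matrix

/-- The state `(h, β̇)` is an equilibrium of the point-mass ring–slug nutation damper
system: both right-hand sides
`h × [M⁻¹ (h + β̇ p e₃)]` and `−K β̇ + h_x h_y/(b q) − h_x h_y/(a q)` vanish,
where `M = diag (a, b, c)` and `e₃ = (0,0,1)`. -/
def IsNutationEquilibrium (a b c K p q : ℝ) (h : Fin 3 → ℝ) (βdot : ℝ) : Prop :=
  crossProduct h
      ((Matrix.diagonal ![a, b, c])⁻¹.mulVec (h + (βdot * p) • (![0, 0, 1] : Fin 3 → ℝ))) = 0
  ∧ -K * βdot + h 0 * h 1 / (b * q) - h 0 * h 1 / (a * q) = 0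

lemma key (a b c K p q : ℝ)
    (ha : 0 < a) (hb : 0 < b) (hc : 0 < c)
    (hab : a ≠ b) (hbc : b ≠ c) (hac : a ≠ c)
    (hK : 0 < K) (hq : 0 < q) (h : Fin 3 → ℝ) (βdot : ℝ) :
    IsNutationEquilibrium a b c K p q h βdot ↔
      (βdot = 0 ∧
        ((h 1 = 0 ∧ h 2 = 0) ∨ (h 0 = 0 ∧ h 2 = 0) ∨ (h 0 = 0 ∧ h 1 = 0))) := by
  have hinv : (Matrix.diagonal ![a, b, c])⁻¹ = Matrix.diagonal ![a⁻¹, b⁻¹, c⁻¹] := by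
    apply Matrix.inv_eq_right_inv
    rw [Matrix.diagonal_mul_diagonal]
    ext i j
    fin_cases i <;> fin_cases j <;> simp [Matrix.diagonal, ha.ne', hb.ne', hc.ne']
  unfold IsNutationEquilibrium
  rw [hinv, cross_apply]
  simp only [Matrix.mulVec_diagonal, Pi.add_apply, Pi.smul_apply, smul_eq_mul,
    Matrix.cons_val_zero, Matrix.cons_val_one, Matrix.head_cons,
    Matrix.cons_val_two, Matrix.tail_cons, mul_zero, mul_one, add_zero]
  constructor
  · rintro ⟨e, e4⟩
    have e1 := congrFun e 0
    have e2 := congrFun e 1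
    have e3 := congrFun e 2
    simp only [Matrix.cons_val_zero, Matrix.cons_val_one, Matrix.head_cons,
      Matrix.cons_val_two, Matrix.tail_cons, Pi.zero_apply] at e1 e2 e3
    have ha' := ha.ne'
    have hb' := hb.ne'
    have hc' := hc.ne'
    have h01 : h 0 * h 1 = 0 := by
      have : h 0 * h 1 * (b⁻¹ - a⁻¹) = 0 := by linarith [e3]
      rcases mul_eq_zero.1 this with h' | h'
      · exact h'
      · exfalso; apply hab; field_simp at h'; linarith
    have hβ : βdot = 0 := by
      rw [h01] at e4
      simp at e4
      rcases e4 with h' | h'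
      · exact absurd h' hK.ne'
      · exact h'
    rw [hβ, zero_mul, add_zero] at e1 e2
    have h12 : h 1 * h 2 = 0 := by
      have : h 1 * h 2 * (c⁻¹ - b⁻¹) = 0 := by linarith [e1]
      rcases mul_eq_zero.1 this with h' | h'
      · exact h'
      · exfalso; apply hbc; field_simp at h'; linarith
    have h02 : h 0 * h 2 = 0 := by
      have : h 0 * h 2 * (c⁻¹ - a⁻¹) = 0 := by linarith [e2]
      rcases mul_eq_zero.1 this with h' | h'
      · exact h'
      · exfalso; apply hac; field_simp at h'; linarith
    refine ⟨hβ, ?_⟩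
    rcases mul_eq_zero.1 h01 with h0 | h1
    · rcases mul_eq_zero.1 h12 with h1 | h2
      · exact Or.inr (Or.inr ⟨h0, h1⟩)
      · exact Or.inr (Or.inl ⟨h0, h2⟩)
    · rcases mul_eq_zero.1 h02 with h0 | h2
      · exact Or.inr (Or.inr ⟨h0, h1⟩)
      · exact Or.inl ⟨h1, h2⟩
  · rintro ⟨hβ, hh⟩
    subst hβ
    refine ⟨?_, ?_⟩
    · ext i
      fin_cases i <;>
        rcases hh with ⟨h1, h2⟩ | ⟨h0, h2⟩ | ⟨h0, h1⟩ <;>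
          simp [*]
    · rcases hh with ⟨h1, h2⟩ | ⟨h0, h2⟩ | ⟨h0, h1⟩ <;> simp [*]

/-- **Equilibria of the point-mass ring–slug nutation damper.**
For pairwise distinct positive principal inertias `a, b, c`, friction constant `K > 0`
and `q > 0`, a state `(h, β̇)` is an equilibrium iff `β̇ = 0` and at most one of the
components of `h` is nonzero.  In particular, on each angular momentum sphere
`h_x² + h_y² + h_z² = r²` with `r > 0`, the equilibria are exactly the six points
`(±r,0,0,0)`, `(0,±r,0,0)` and `(0,0,±r,0)`. -/
theorem nutation_damper_equilibria
    (a b c K p q : ℝ)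
    (ha : 0 < a) (hb : 0 < b) (hc : 0 < c)
    (hab : a ≠ b) (hbc : b ≠ c) (hac : a ≠ c)
    (hK : 0 < K) (hq : 0 < q) :
    (∀ (h : Fin 3 → ℝ) (βdot : ℝ),
      IsNutationEquilibrium a b c K p q h βdot ↔
        (βdot = 0 ∧
          ((h 1 = 0 ∧ h 2 = 0) ∨ (h 0 = 0 ∧ h 2 = 0) ∨ (h 0 = 0 ∧ h 1 = 0)))) ∧
    (∀ r : ℝ, 0 < r → ∀ (h : Fin 3 → ℝ) (βdot : ℝ),
      h 0 ^ 2 + h 1 ^ 2 + h 2 ^ 2 = r ^ 2 →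
      (IsNutationEquilibrium a b c K p q h βdot ↔
        (βdot = 0 ∧
          (h = ![r, 0, 0] ∨ h = ![-r, 0, 0] ∨ h = ![0, r, 0] ∨ h = ![0, -r, 0] ∨
            h = ![0, 0, r] ∨ h = ![0, 0, -r])))) := by
  refine ⟨fun h βdot => key a b c K p q ha hb hc hab hbc hac hK hq h βdot,
    fun r hr h βdot hs => ?_⟩
  rw [key a b c K p q ha hb hc hab hbc hac hK hq h βdot]
  constructor
  · rintro ⟨hβ, hh⟩
    refine ⟨hβ, ?_⟩
    rcases hh with ⟨h1, h2⟩ | ⟨h0, h2⟩ | ⟨h0, h1⟩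
    · have hx : (h 0 - r) * (h 0 + r) = 0 := by nlinarith
      rcases mul_eq_zero.1 hx with h' | h'
      · exact Or.inl (by ext i; fin_cases i <;> simp [h1, h2] <;> linarith)
      · exact Or.inr (Or.inl (by ext i; fin_cases i <;> simp [h1, h2] <;> linarith))
    · have hx : (h 1 - r) * (h 1 + r) = 0 := by nlinarith
      rcases mul_eq_zero.1 hx with h' | h'
      · exact Or.inr (Or.inr (Or.inl (by ext i; fin_cases i <;> simp [h0, h2] <;> linarith)))
      · exact Or.inr (Or.inr (Or.inr (Or.inl (by ext i; fin_cases i <;> simp [h0, h2] <;> linarith))))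
    · have hx : (h 2 - r) * (h 2 + r) = 0 := by nlinarith
      rcases mul_eq_zero.1 hx with h' | h'
      · exact Or.inr (Or.inr (Or.inr (Or.inr (Or.inl (by ext i; fin_cases i <;> simp [h0, h1] <;> linarith)))))
      · exact Or.inr (Or.inr (Or.inr (Or.inr (Or.inr (by ext i; fin_cases i <;> simp [h0, h1] <;> linarith)))))
  · rintro ⟨hβ, hh⟩
    refine ⟨hβ, ?_⟩
    rcases hh with rfl | rfl | rfl | rfl | rfl | rfl <;> simp
end
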